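/- Let q > 1 be real, y be real, and m ≥ 1 an integer. If λ, λ' : (m) → ℝ both satisfy ∑_{i ∈ (m)} λ_i = 1 and ∑_{i ∈ (m)} λ_i · H_r(χ_i(y,q)|q) = q^{-r(m-1)/2} · H_r(y|q) for all r = 1, …, m-1, then λ = λ'. -/
import Mathlib


/-- `[n]_q = 1 + q + ⋯ + q^{n-1}`. -/
def qInt (q : ℝ) (n : ℕ) : ℝ := ∑ i ∈ Finset.range n, q ^ i

/-- The `q`-Hermite polynomials `H_n(x|q)`:
`H_0 = 1`, `H_1 = x`, `H_{n+2} = x·H_{n+1} - [n+1]_q·H_n`. -/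
noncomputable def Hq (q x : ℝ) : ℕ → ℝ
  | 0 => 1
  | 1 => x
  | n + 2 => x * Hq q x (n + 1) - qInt q (n + 1) * Hq q x n

/-- `χ_n(y,q) = y(q^{n/2}+q^{-n/2})/2 + √(y²+4/(q-1))·(q^{n/2}-q^{-n/2})/2` for `n : ℤ`. -/
noncomputable def chi (q y : ℝ) (n : ℤ) : ℝ :=
  y * (q ^ ((n : ℝ) / 2) + q ^ (-(n : ℝ) / 2)) / 2
    + Real.sqrt (y ^ 2 + 4 / (q - 1)) * (q ^ ((n : ℝ) / 2) - q ^ (-(n : ℝ) / 2)) / 2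

/-- The index set `(m) = {2j - (m-1) : j = 0, 1, …, m-1} ⊆ ℤ`. -/
def indexSet (m : ℕ) : Finset ℤ :=
  Finset.image (fun j : ℕ => 2 * (j : ℤ) - ((m : ℤ) - 1)) (Finset.range m)

lemma hq_mul (q x : ℝ) (j : ℕ) :
    x * Hq q x j = Hq q x (j + 1) + qInt q j * Hq q x (j - 1) := by
  cases j with
  | zero => simp [Hq, qInt]
  | succ n =>
    show x * Hq q x (n+1) = Hq q x (n+2) + qInt q (n+1) * Hq q x n
    rw [show Hq q x (n+2) = x * Hq q x (n+1) - qInt q (n+1) * Hq q x n from rfl]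
    ring

lemma mon_span (q : ℝ) (r : ℕ) :
    ∃ c : ℕ → ℝ, ∀ x : ℝ, x ^ r = ∑ j ∈ Finset.range (r + 1), c j * Hq q x j := by
  induction r with
  | zero => exact ⟨fun _ => 1, fun x => by simp [Hq]⟩
  | succ r ih =>
    obtain ⟨c, hc⟩ := ih
    refine ⟨fun k => (if k = 0 then 0 else c (k - 1)) +
      (if k < r then c (k + 1) * qInt q (k + 1) else 0), fun x => ?_⟩
    have h1 : x ^ (r + 1) = ∑ j ∈ Finset.range (r + 1),
        (c j * Hq q x (j + 1) + c j * (qInt q j * Hq q x (j - 1))) := by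
      calc x ^ (r+1) = x * x ^ r := by ring
        _ = ∑ j ∈ Finset.range (r + 1), c j * (x * Hq q x j) := by
              rw [hc, Finset.mul_sum]; exact Finset.sum_congr rfl fun j _ => by ring
        _ = _ := Finset.sum_congr rfl fun j _ => by rw [hq_mul]; ring
    rw [h1, Finset.sum_add_distrib]
    have hsplit : ∑ j ∈ Finset.range (r + 2),
        ((if j = 0 then (0:ℝ) else c (j - 1)) +
          if j < r then c (j + 1) * qInt q (j + 1) else 0) * Hq q x j
        = (∑ j ∈ Finset.range (r + 2), (if j = 0 then (0:ℝ) else c (j - 1)) * Hq q x j)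
          + ∑ j ∈ Finset.range (r + 2),
              (if j < r then c (j + 1) * qInt q (j + 1) else 0) * Hq q x j := by
      rw [← Finset.sum_add_distrib]
      exact Finset.sum_congr rfl fun j _ => by ring
    show _ = ∑ j ∈ Finset.range (r + 2),
        ((if j = 0 then (0:ℝ) else c (j - 1)) +
          if j < r then c (j + 1) * qInt q (j + 1) else 0) * Hq q x j
    rw [hsplit]
    congr 1
    · -- shift: ∑_{j∈range(r+1)} c j H_{j+1} = ∑_{k∈range(r+2)} (if k=0 then 0 else c (k-1)) H_k
      rw [Finset.sum_range_succ' (fun k => (if k = 0 then (0:ℝ) else c (k-1)) * Hq q x k) (r+1)]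
      simp
    · -- ∑_{j∈range(r+1)} c j qInt j H_{j-1} = ∑_{k∈range(r+2)} (if k<r then c(k+1) qInt(k+1) else 0) H_k
      rw [Finset.sum_range_succ' (fun j => c j * (qInt q j * Hq q x (j - 1))) r]
      have h0 : c 0 * (qInt q 0 * Hq q x (0 - 1)) = 0 := by simp [qInt]
      rw [h0, add_zero]
      rw [show (r + 1 + 1) = (r + 2) from rfl]
      rw [← Finset.sum_subset (Finset.range_subset_range.mpr (by omega : r ≤ r + 2))
        (fun k _ hk => by
          rw [if_neg (by simpa using hk), zero_mul])]
      exact Finset.sum_congr rfl fun k hk => by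
        rw [if_pos (Finset.mem_range.mp hk), show k + 1 - 1 = k from rfl]; ring

lemma chi_strictMono (q : ℝ) (hq1 : 1 < q) (y : ℝ) : StrictMono (chi q y) := by
  set s := Real.sqrt (y ^ 2 + 4 / (q - 1)) with hs
  have hq0 : (0:ℝ) < q := by linarith
  have hys : |y| < s := by
    rw [hs]
    rw [← Real.sqrt_sq_eq_abs]
    apply Real.sqrt_lt_sqrt (sq_nonneg y)
    have : 0 < 4 / (q - 1) := div_pos (by norm_num) (by linarith)
    linarith
  have ha : 0 < (y + s) / 2 := by
    have := neg_abs_le y; linarith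
  have hb : (y - s) / 2 < 0 := by
    have := le_abs_self y; linarith
  intro a b hab
  have key : ∀ n : ℤ, chi q y n =
      (y + s) / 2 * q ^ ((n : ℝ) / 2) + (y - s) / 2 * q ^ (-(n : ℝ) / 2) := by
    intro n; rw [chi]; ring
  rw [key, key]
  have hmono : q ^ ((a : ℝ) / 2) < q ^ ((b : ℝ) / 2) := by
    apply Real.rpow_lt_rpow_left_iff hq1 |>.mpr
    have : (a : ℝ) < b := by exact_mod_cast hab
    linarith
  have hmono' : q ^ (-(b : ℝ) / 2) < q ^ (-(a : ℝ) / 2) := by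
    apply Real.rpow_lt_rpow_left_iff hq1 |>.mpr
    have : (a : ℝ) < b := by exact_mod_cast hab
    linarith
  have h1 : (y + s) / 2 * q ^ ((a : ℝ) / 2) < (y + s) / 2 * q ^ ((b : ℝ) / 2) :=
    mul_lt_mul_of_pos_left hmono ha
  have h2 : (y - s) / 2 * q ^ (-(a : ℝ) / 2) < (y - s) / 2 * q ^ (-(b : ℝ) / 2) := by
    have := mul_lt_mul_of_neg_left hmono' hb
    linarith
  linarith

theorem stmt16 (q : ℝ) (hq1 : 1 < q) (y : ℝ) (m : ℕ) (hm : 1 ≤ m)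
    (lam lam' : ℤ → ℝ)
    (h1 : ∑ i ∈ indexSet m, lam i = 1)
    (h2 : ∀ r : ℕ, 1 ≤ r → r ≤ m - 1 →
      ∑ i ∈ indexSet m, lam i * Hq q (chi q y i) r
        = q ^ (-((r * (m - 1) : ℕ) : ℝ) / 2) * Hq q y r)
    (h1' : ∑ i ∈ indexSet m, lam' i = 1)
    (h2' : ∀ r : ℕ, 1 ≤ r → r ≤ m - 1 →
      ∑ i ∈ indexSet m, lam' i * Hq q (chi q y i) r
        = q ^ (-((r * (m - 1) : ℕ) : ℝ) / 2) * Hq q y r) :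
    ∀ i ∈ indexSet m, lam i = lam' i := by
  intro i0 hi0
  set s := indexSet m with hsdef
  set v : ℤ → ℝ := fun i => chi q y i with hv
  set μ : ℤ → ℝ := fun i => lam i - lam' i with hμ
  -- Step A
  have hA : ∀ j : ℕ, j < m → ∑ i ∈ s, μ i * Hq q (v i) j = 0 := by
    intro j hj
    have hsplit : ∑ i ∈ s, μ i * Hq q (v i) j
        = (∑ i ∈ s, lam i * Hq q (v i) j) - ∑ i ∈ s, lam' i * Hq q (v i) j := by
      rw [← Finset.sum_sub_distrib]
      exact Finset.sum_congr rfl fun i _ => by simp [hμ]; ring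
    rcases Nat.eq_zero_or_pos j with hj0 | hj1
    · subst hj0
      simp only [Hq, mul_one] at hsplit ⊢
      rw [hsplit, h1, h1', sub_self]
    · have hjm : j ≤ m - 1 := by omega
      rw [hsplit, h2 j hj1 hjm, h2' j hj1 hjm, sub_self]
  -- Step B
  have hB : ∀ r : ℕ, r < m → ∑ i ∈ s, μ i * (v i) ^ r = 0 := by
    intro r hr
    obtain ⟨c, hc⟩ := mon_span q r
    calc ∑ i ∈ s, μ i * (v i) ^ r
        = ∑ i ∈ s, ∑ j ∈ Finset.range (r + 1), c j * (μ i * Hq q (v i) j) := by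
          refine Finset.sum_congr rfl fun i _ => ?_
          rw [hc (v i), Finset.mul_sum]
          exact Finset.sum_congr rfl fun j _ => by ring
      _ = ∑ j ∈ Finset.range (r + 1), c j * ∑ i ∈ s, μ i * Hq q (v i) j := by
          rw [Finset.sum_comm]
          exact Finset.sum_congr rfl fun j _ => by rw [Finset.mul_sum]
      _ = 0 := by
          refine Finset.sum_eq_zero fun j hj => ?_
          have hjm : j < m := by have := Finset.mem_range.mp hj; omega
          rw [hA j hjm, mul_zero]
  -- Step C : Lagrange
  have hinj : Set.InjOn v s := ((chi_strictMono q hq1 y).injective).injOn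
  set P : Polynomial ℝ := Lagrange.basis s v i0 with hP
  have hcard : s.card ≤ m := le_trans (Finset.card_image_le) (by simp)
  have hdeg : P.natDegree < m := by
    rw [hP, Lagrange.natDegree_basis hinj hi0]
    omega
  have heval : ∑ i ∈ s, μ i * P.eval (v i) = μ i0 := by
    rw [Finset.sum_eq_single i0]
    · rw [Lagrange.eval_basis_self hinj hi0, mul_one]
    · intro j hj hne
      rw [Lagrange.eval_basis_of_ne hne.symm hj, mul_zero]
    · intro h; exact absurd hi0 h
  have hzero : ∑ i ∈ s, μ i * P.eval (v i) = 0 := by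
    calc ∑ i ∈ s, μ i * P.eval (v i)
        = ∑ i ∈ s, ∑ r ∈ Finset.range m, P.coeff r * (μ i * (v i) ^ r) := by
          refine Finset.sum_congr rfl fun i _ => ?_
          rw [Polynomial.eval_eq_sum_range' hdeg, Finset.mul_sum]
          exact Finset.sum_congr rfl fun r _ => by ring
      _ = ∑ r ∈ Finset.range m, P.coeff r * ∑ i ∈ s, μ i * (v i) ^ r := by
          rw [Finset.sum_comm]
          exact Finset.sum_congr rfl fun r _ => by rw [Finset.mul_sum]
      _ = 0 := Finset.sum_eq_zero fun r hr => by
          rw [hB r (Finset.mem_range.mp hr), mul_zero]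
  have : μ i0 = 0 := by rw [← heval, hzero]
  have := sub_eq_zero.mp this
  exact this
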